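/- Let (T₁,...,Tₙ) be a doubly twisted near-isometry. Then for every (k₁,...,kₙ) ∈ ℕ₀ⁿ, the intersection ∩_{i=1}^n T_i^{k_i}(ker T_i*) equals T₁^{k₁} ⋯ Tₙ^{kₙ}(∩_{i=1}^n ker T_i*). -/

import Mathlib

open ContinuousLinearMap

/-- Near-isometry: bounded-below contraction with `T*ᵐ Tᵐ⁺¹ H ⊆ T H` for all `m`. -/
def IsNearIsometry {K : Type*} [NormedAddCommGroup K] [InnerProductSpace ℂ K]
    [CompleteSpace K] (T : K →L[ℂ] K) : Prop :=
  (∃ δ > (0 : ℝ), ∀ x : K, δ * ‖x‖ ≤ ‖T x‖ ∧ ‖T x‖ ≤ ‖x‖) ∧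
  ∀ n : ℕ, ∀ x : K, ∃ y : K, ((adjoint T) ^ n) ((T ^ (n + 1)) x) = T y

/-- `(T₁,…,Tₙ)` is a *doubly twisted near-isometry* with respect to the
commuting family of unitaries `U i j` (with the convention `U j i = (U i j)*`):
each `T i` is a near-isometry, `T_i* T_j = U_ij* T_j T_i*`,
`T_k U_ij = U_ij T_k`, and `T_i T_j = U_ij T_j T_i` for `i < j`. -/
def IsDoublyTwisted {K : Type*} [NormedAddCommGroup K] [InnerProductSpace ℂ K]
    [CompleteSpace K] {n : ℕ} (T : Fin n → K →L[ℂ] K)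
    (U : Fin n → Fin n → K →L[ℂ] K) : Prop :=
  (∀ i, IsNearIsometry (T i)) ∧
  (∀ i j, i ≠ j → U i j * adjoint (U i j) = 1 ∧ adjoint (U i j) * U i j = 1) ∧
  (∀ i j, i < j → U j i = adjoint (U i j)) ∧
  (∀ i j k l, i ≠ j → k ≠ l → U i j * U k l = U k l * U i j) ∧
  (∀ i j, i < j → adjoint (T i) * T j = adjoint (U i j) * (T j * adjoint (T i))) ∧
  (∀ k i j, i ≠ j → T k * U i j = U i j * T k) ∧
  (∀ i j, i < j → T i * T j = U i j * (T j * T i))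

/-- The ordered product `T₁^{k₁} ⋯ Tₙ^{kₙ}`. -/
def opProd {K : Type*} [NormedAddCommGroup K] [InnerProductSpace ℂ K]
    {n : ℕ} (T : Fin n → K →L[ℂ] K) (k : Fin n → ℕ) : K →L[ℂ] K :=
  (List.ofFn fun i => (T i) ^ (k i)).prod

/-!
Induct on `n`, peeling off `T₁`. For `j ≠ 1` the operators `T₁`, `T₁*` and `Tⱼ` commute up to
unitaries that are central for the whole tuple, so `T₁^{k₁}` moves across `T₂^{k₂} ⋯ Tₙ^{kₙ}`, and
these factors preserve and reflect `ker T₁*`. The one step that is not formal: if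
`T₁^{k₁} x ∈ Tⱼ^{kⱼ}(ker Tⱼ*)` then already `x ∈ Tⱼ^{kⱼ}(ker Tⱼ*)`. Indeed the injective operator
`T₁^{k₁}` leaves invariant both `ran Tⱼ^{kⱼ}` (closed, as `Tⱼ` is bounded below) and its orthogonal
complement `ker (Tⱼ*)^{kⱼ}`, so `x = Tⱼ^{kⱼ} c`, and the twisted relations then force `Tⱼ* c = 0`.
-/

section TwistCommute

variable {M : Type*} [Monoid M]

def TwistCommute (C : Submonoid M) (a b : M) : Prop :=
  ∃ w ∈ C, a * b = w * (b * a)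

def twistCommuteRight (C : Submonoid M) (a : M) : Submonoid M where
  carrier := {b | (∀ w ∈ C, Commute w b) ∧ TwistCommute C a b}
  one_mem' := ⟨fun w _ => Commute.one_right w, 1, C.one_mem, by simp⟩
  mul_mem' := by
    rintro b₁ b₂ ⟨hb₁, w₁, hw₁, h₁⟩ ⟨hb₂, w₂, hw₂, h₂⟩
    refine ⟨fun w hw => (hb₁ w hw).mul_right (hb₂ w hw), w₁ * w₂, C.mul_mem hw₁ hw₂, ?_⟩
    calc a * (b₁ * b₂) = w₁ * (b₁ * (a * b₂)) := by simp only [← mul_assoc, h₁]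
      _ = w₁ * ((w₂ * b₁) * (b₂ * a)) := by rw [h₂, (hb₁ w₂ hw₂).eq]; simp only [mul_assoc]
      _ = w₁ * w₂ * (b₁ * b₂ * a) := by simp only [mul_assoc]

def twistCommuteLeft (C : Submonoid M) (b : M) : Submonoid M where
  carrier := {a | (∀ w ∈ C, Commute w a) ∧ TwistCommute C a b}
  one_mem' := ⟨fun w _ => Commute.one_right w, 1, C.one_mem, by simp⟩
  mul_mem' := by
    rintro a₁ a₂ ⟨ha₁, w₁, hw₁, h₁⟩ ⟨ha₂, w₂, hw₂, h₂⟩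
    refine ⟨fun w hw => (ha₁ w hw).mul_right (ha₂ w hw), w₂ * w₁, C.mul_mem hw₂ hw₁, ?_⟩
    calc a₁ * a₂ * b = (a₁ * w₂) * (b * a₂) := by rw [mul_assoc, h₂]; simp only [mul_assoc]
      _ = w₂ * ((a₁ * b) * a₂) := by rw [← (ha₁ w₂ hw₂).eq]; simp only [mul_assoc]
      _ = w₂ * w₁ * (b * (a₁ * a₂)) := by rw [h₁]; simp only [mul_assoc]

theorem TwistCommute.pow_right {C : Submonoid M} {a b : M} (h : TwistCommute C a b)
    (hb : ∀ w ∈ C, Commute w b) (q : ℕ) : TwistCommute C a (b ^ q) :=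
  (pow_mem (show b ∈ twistCommuteRight C a from ⟨hb, h⟩) q).2

theorem TwistCommute.pow_left {C : Submonoid M} {a b : M} (h : TwistCommute C a b)
    (ha : ∀ w ∈ C, Commute w a) (p : ℕ) : TwistCommute C (a ^ p) b :=
  (pow_mem (show a ∈ twistCommuteLeft C b from ⟨ha, h⟩) p).2

end TwistCommute

theorem Commute.star_left_of_mem_unitary {R : Type*} [Monoid R] [StarMul R] {u t : R}
    (hu : u ∈ unitary R) (h : Commute u t) : Commute (star u) t :=
  calc star u * t = star u * (t * u) * star u := by
        rw [mul_assoc, mul_assoc, Unitary.mul_star_self_of_mem hu, mul_one]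
    _ = t * star u := by rw [← h.eq, ← mul_assoc, Unitary.star_mul_self_of_mem hu, one_mul]

section OpProd

variable {K : Type*} [NormedAddCommGroup K] [InnerProductSpace ℂ K] {n : ℕ}

theorem opProd_mem (S : Submonoid (K →L[ℂ] K)) {T : Fin n → K →L[ℂ] K} (hT : ∀ i, T i ∈ S)
    (k : Fin n → ℕ) : opProd T k ∈ S :=
  S.list_prod_mem fun _ hA => by
    obtain ⟨i, rfl⟩ := List.mem_ofFn.mp hA
    exact pow_mem (hT i) (k i)

theorem opProd_succ (T : Fin (n + 1) → K →L[ℂ] K) (k : Fin (n + 1) → ℕ) :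
    opProd T k = T 0 ^ k 0 * opProd (Fin.tail T) (Fin.tail k) := by
  simp only [opProd, List.ofFn_succ, List.prod_cons]
  rfl

theorem injective_opProd {T : Fin n → K →L[ℂ] K} (hT : ∀ i, Function.Injective (T i))
    (k : Fin n → ℕ) : Function.Injective (opProd T k) :=
  opProd_mem { carrier := {A | Function.Injective A}
               one_mem' := Function.injective_id
               mul_mem' := fun hA hB => hA.comp hB } hT k

theorem commute_opProd {T : Fin n → K →L[ℂ] K} {w : K →L[ℂ] K} (hw : ∀ i, Commute w (T i))
    (k : Fin n → ℕ) : Commute w (opProd T k) := by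
  have h := opProd_mem (Submonoid.centralizer {w})
    (fun i => Submonoid.mem_centralizer_iff.mpr (by simpa using (hw i).eq)) k
  simpa [Submonoid.mem_centralizer_iff, commute_iff_eq] using h

theorem TwistCommute.opProd_right {C : Submonoid (K →L[ℂ] K)} {A : K →L[ℂ] K}
    {T : Fin n → K →L[ℂ] K} (hA : ∀ i, TwistCommute C A (T i))
    (hC : ∀ w ∈ C, ∀ i, Commute w (T i)) (k : Fin n → ℕ) : TwistCommute C A (opProd T k) :=
  (opProd_mem (twistCommuteRight C A) (fun i => ⟨fun w hw => hC w hw i, hA i⟩) k).2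

end OpProd

theorem TwistCommute.apply_eq_zero_iff {R M : Type*} [Semiring R] [TopologicalSpace M]
    [AddCommMonoid M] [Module R M] {C : Submonoid (M →L[R] M)}
    (hC : ∀ w ∈ C, Function.Injective w) {X Y : M →L[R] M} (h : TwistCommute C X Y)
    (hY : Function.Injective Y) {x : M} : X (Y x) = 0 ↔ X x = 0 := by
  obtain ⟨w, hw, e⟩ := h
  have hx : X (Y x) = w (Y (X x)) := DFunLike.congr_fun e x
  rw [hx, map_eq_zero_iff _ (hC w hw), map_eq_zero_iff _ hY]

theorem antilipschitzWith_pow {𝕜 E : Type*} [NormedField 𝕜] [SeminormedAddCommGroup E]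
    [NormedSpace 𝕜 E] {A : E →L[𝕜] E} {L : NNReal} (hA : AntilipschitzWith L A) :
    ∀ q : ℕ, AntilipschitzWith (L ^ q) (A ^ q)
  | 0 => by simpa using AntilipschitzWith.id
  | q + 1 => by
    rw [pow_succ', pow_succ]
    exact (antilipschitzWith_pow hA q).comp hA

section Hilbert

variable {𝕜 E : Type*} [RCLike 𝕜] [NormedAddCommGroup E] [InnerProductSpace 𝕜 E]

theorem Submodule.mem_of_injective_of_mapsTo {K : Submodule 𝕜 E} [K.HasOrthogonalProjection]
    {A : E →L[𝕜] E} (hA : Function.Injective A) (hK : Set.MapsTo A K K)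
    (hKperp : Set.MapsTo A Kᗮ Kᗮ) {a : E} (ha : A a ∈ K) : a ∈ K := by
  obtain ⟨r, hr, w, hw, rfl⟩ := K.exists_add_mem_mem_orthogonal a
  have hAw : A w ∈ K ⊓ Kᗮ := by
    refine ⟨?_, hKperp hw⟩
    simpa using K.sub_mem ha (hK hr)
  rw [K.inf_orthogonal_eq_bot, Submodule.mem_bot, map_eq_zero_iff _ hA] at hAw
  simpa [hAw] using hr

theorem mem_map_pow_ker_adjoint_of_apply_mem [CompleteSpace E] {C : Submonoid (E →L[𝕜] E)}
    (hC : ∀ w ∈ C, Function.Injective w) {A B : E →L[𝕜] E} (hA : Function.Injective A)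
    {q : ℕ} (hBq_inj : Function.Injective (B ^ q)) (hBq : IsClosed (Set.range (B ^ q)))
    (hAB : TwistCommute C A B) (hBA : TwistCommute C (adjoint B) A)
    (hCB : ∀ w ∈ C, Commute w B) (hCB' : ∀ w ∈ C, Commute w (adjoint B)) {a : E}
    (ha : A a ∈ (LinearMap.ker (adjoint B : E →ₗ[𝕜] E)).map ((B ^ q : E →L[𝕜] E) : E →ₗ[𝕜] E)) :
    a ∈ (LinearMap.ker (adjoint B : E →ₗ[𝕜] E)).map ((B ^ q : E →L[𝕜] E) : E →ₗ[𝕜] E) := by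
  obtain ⟨b, hb, hba⟩ := ha
  obtain ⟨w, hw, hAw⟩ := hAB.pow_right hCB q
  have hA_Bq : ∀ x, A ((B ^ q) x) = (B ^ q) (w (A x)) := by
    have e : A * B ^ q = B ^ q * (w * A) := by
      rw [hAw, ← mul_assoc, ((hCB w hw).pow_right q).eq, mul_assoc]
    exact fun x => DFunLike.congr_fun e x
  set K := LinearMap.range ((B ^ q : E →L[𝕜] E) : E →ₗ[𝕜] E)
  have : CompleteSpace K := hBq.completeSpace_coe
  obtain ⟨c, rfl⟩ : a ∈ K := by
    refine Submodule.mem_of_injective_of_mapsTo hA ?_ ?_ ⟨b, hba⟩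
    · rintro _ ⟨x, rfl⟩
      exact ⟨w (A x), (hA_Bq x).symm⟩
    · have hBA_pow := hBA.pow_left hCB' q
      intro x hx
      rw [SetLike.mem_coe, orthogonal_range, ← star_eq_adjoint, star_pow, star_eq_adjoint,
        LinearMap.mem_ker] at hx ⊢
      exact (hBA_pow.apply_eq_zero_iff hC hA).mpr hx
  have hb_eq : w (A c) = b := hBq_inj (by rw [← hA_Bq]; exact hba.symm)
  refine ⟨c, ?_, rfl⟩
  rw [SetLike.mem_coe, LinearMap.mem_ker, coe_coe] at hb ⊢
  have hw_comm : adjoint B (w (A c)) = w (adjoint B (A c)) :=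
    DFunLike.congr_fun (hCB' w hw).eq.symm (A c)
  rw [← hb_eq, hw_comm, map_eq_zero_iff _ (hC w hw)] at hb
  exact (hBA.apply_eq_zero_iff hC hA).mp hb

end Hilbert

section TwistedFamily

variable {H : Type*} [NormedAddCommGroup H] [InnerProductSpace ℂ H] [CompleteSpace H] {n : ℕ}

/-- The commutation relations of a doubly twisted tuple, with the twisting unitaries replaced by
an arbitrary submonoid `Z` of injective operators commuting with every `T i` and `adjoint (T i)`. -/
structure IsTwistedFamily (Z : Submonoid (H →L[ℂ] H)) (T : Fin n → H →L[ℂ] H) : Prop where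
  exists_antilipschitzWith : ∀ i, ∃ L, AntilipschitzWith L (T i)
  injective_of_mem : ∀ w ∈ Z, Function.Injective w
  commute_of_mem : ∀ w ∈ Z, ∀ i, Commute w (T i)
  commute_adjoint_of_mem : ∀ w ∈ Z, ∀ i, Commute w (adjoint (T i))
  twistCommute : ∀ i j, i < j → TwistCommute Z (T i) (T j)
  twistCommute_adjoint_left : ∀ i j, i < j → TwistCommute Z (adjoint (T i)) (T j)
  twistCommute_adjoint_right : ∀ i j, i < j → TwistCommute Z (adjoint (T j)) (T i)

namespace IsTwistedFamily

variable {Z : Submonoid (H →L[ℂ] H)}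

theorem injective_pow {T : Fin n → H →L[ℂ] H} (hT : IsTwistedFamily Z T) (i : Fin n)
    (q : ℕ) : Function.Injective (T i ^ q) :=
  (antilipschitzWith_pow (hT.exists_antilipschitzWith i).choose_spec q).injective

theorem injective {T : Fin n → H →L[ℂ] H} (hT : IsTwistedFamily Z T) (i : Fin n) :
    Function.Injective (T i) :=
  (hT.exists_antilipschitzWith i).choose_spec.injective

theorem isClosed_range_pow {T : Fin n → H →L[ℂ] H} (hT : IsTwistedFamily Z T) (i : Fin n)
    (q : ℕ) : IsClosed (Set.range (T i ^ q)) :=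
  (antilipschitzWith_pow (hT.exists_antilipschitzWith i).choose_spec q).isClosed_range
    (T i ^ q).uniformContinuous

section Succ

variable {T : Fin (n + 1) → H →L[ℂ] H}

theorem tail (hT : IsTwistedFamily Z T) : IsTwistedFamily Z (Fin.tail T) where
  exists_antilipschitzWith i := hT.exists_antilipschitzWith i.succ
  injective_of_mem := hT.injective_of_mem
  commute_of_mem w hw i := hT.commute_of_mem w hw i.succ
  commute_adjoint_of_mem w hw i := hT.commute_adjoint_of_mem w hw i.succ
  twistCommute i j hij := hT.twistCommute i.succ j.succ (Fin.succ_lt_succ_iff.mpr hij)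
  twistCommute_adjoint_left i j hij :=
    hT.twistCommute_adjoint_left i.succ j.succ (Fin.succ_lt_succ_iff.mpr hij)
  twistCommute_adjoint_right i j hij :=
    hT.twistCommute_adjoint_right i.succ j.succ (Fin.succ_lt_succ_iff.mpr hij)

theorem twistCommute_adjoint_head_opProd_tail (hT : IsTwistedFamily Z T) (k : Fin n → ℕ) :
    TwistCommute Z (adjoint (T 0)) (opProd (Fin.tail T) k) :=
  TwistCommute.opProd_right (fun i => hT.twistCommute_adjoint_left 0 i.succ i.succ_pos)
    hT.tail.commute_of_mem k

theorem twistCommute_pow_head_opProd_tail (hT : IsTwistedFamily Z T) (p : ℕ)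
    (k : Fin n → ℕ) :
    TwistCommute Z (T 0 ^ p) (opProd (Fin.tail T) k) :=
  (TwistCommute.opProd_right (fun i => hT.twistCommute 0 i.succ i.succ_pos)
    hT.tail.commute_of_mem k).pow_left (fun w hw => hT.commute_of_mem w hw 0) p

theorem iInf_map_pow_ker_adjoint_le_of_tail (hT : IsTwistedFamily Z T) (k : Fin (n + 1) → ℕ)
    (htail : (⨅ i, (LinearMap.ker (adjoint (Fin.tail T i) : H →ₗ[ℂ] H)).map
        ((Fin.tail T i ^ Fin.tail k i : H →L[ℂ] H) : H →ₗ[ℂ] H)) ≤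
      (⨅ i, LinearMap.ker (adjoint (Fin.tail T i) : H →ₗ[ℂ] H)).map
        (opProd (Fin.tail T) (Fin.tail k) : H →ₗ[ℂ] H)) :
    (⨅ i, (LinearMap.ker (adjoint (T i) : H →ₗ[ℂ] H)).map ((T i ^ k i : H →L[ℂ] H) : H →ₗ[ℂ] H)) ≤
      (⨅ i, LinearMap.ker (adjoint (T i) : H →ₗ[ℂ] H)).map (opProd T k : H →ₗ[ℂ] H) := by
  intro x hx
  rw [Submodule.mem_iInf] at hx
  obtain ⟨a, ha, rfl⟩ := hx 0
  obtain ⟨c, hc, rfl⟩ := htail <| (Submodule.mem_iInf _).mpr fun i =>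
    mem_map_pow_ker_adjoint_of_apply_mem hT.injective_of_mem (hT.injective_pow 0 (k 0))
      (hT.injective_pow i.succ _) (hT.isClosed_range_pow i.succ _)
      ((hT.twistCommute 0 i.succ i.succ_pos).pow_left (fun w hw => hT.commute_of_mem w hw 0) _)
      ((hT.twistCommute_adjoint_right 0 i.succ i.succ_pos).pow_right
        (fun w hw => hT.commute_of_mem w hw 0) _)
      (fun w hw => hT.commute_of_mem w hw i.succ)
      (fun w hw => hT.commute_adjoint_of_mem w hw i.succ) (hx i.succ)
  refine ⟨c, ?_, by rw [opProd_succ]; rfl⟩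
  rw [SetLike.mem_coe, Submodule.mem_iInf] at hc ⊢
  refine Fin.cases ?_ hc
  rw [SetLike.mem_coe, LinearMap.mem_ker, coe_coe] at ha
  exact ((hT.twistCommute_adjoint_head_opProd_tail _).apply_eq_zero_iff hT.injective_of_mem
    (injective_opProd hT.tail.injective _)).mp ha

theorem le_iInf_map_pow_ker_adjoint_of_tail (hT : IsTwistedFamily Z T) (k : Fin (n + 1) → ℕ)
    (htail : (⨅ i, LinearMap.ker (adjoint (Fin.tail T i) : H →ₗ[ℂ] H)).map
        (opProd (Fin.tail T) (Fin.tail k) : H →ₗ[ℂ] H) ≤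
      (⨅ i, (LinearMap.ker (adjoint (Fin.tail T i) : H →ₗ[ℂ] H)).map
        ((Fin.tail T i ^ Fin.tail k i : H →L[ℂ] H) : H →ₗ[ℂ] H))) :
    (⨅ i, LinearMap.ker (adjoint (T i) : H →ₗ[ℂ] H)).map (opProd T k : H →ₗ[ℂ] H) ≤
      (⨅ i, (LinearMap.ker (adjoint (T i) : H →ₗ[ℂ] H)).map
        ((T i ^ k i : H →L[ℂ] H) : H →ₗ[ℂ] H)) := by
  set P := T 0 ^ k 0
  set Q := opProd (Fin.tail T) (Fin.tail k)
  rintro _ ⟨c, hc, rfl⟩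
  rw [SetLike.mem_coe, Submodule.mem_iInf] at hc
  have hc' : ∀ i, adjoint (T i) c = 0 := hc
  rw [opProd_succ, Submodule.mem_iInf]
  refine Fin.cases ⟨Q c, ((hT.twistCommute_adjoint_head_opProd_tail _).apply_eq_zero_iff
    hT.injective_of_mem (injective_opProd hT.tail.injective _)).mpr (hc' 0), rfl⟩ fun i => ?_
  obtain ⟨w, hw, hPQ⟩ := hT.twistCommute_pow_head_opProd_tail (k 0) (Fin.tail k)
  have hPQc : (P * Q) c = Q (w (P c)) := by
    rw [hPQ, ← mul_assoc, (commute_opProd (hT.tail.commute_of_mem w hw) _).eq, mul_assoc]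
    rfl
  have hwPc : w (P c) ∈ ⨅ j, LinearMap.ker (adjoint (Fin.tail T j) : H →ₗ[ℂ] H) := by
    refine (Submodule.mem_iInf _).mpr fun j => ?_
    have hPc : adjoint (T j.succ) (P c) = 0 :=
      (((hT.twistCommute_adjoint_right 0 j.succ j.succ_pos).pow_right
        (fun w hw => hT.commute_of_mem w hw 0) _).apply_eq_zero_iff hT.injective_of_mem
        (hT.injective_pow 0 _)).mpr (hc' j.succ)
    change adjoint (T j.succ) (w (P c)) = 0
    rw [← mul_apply_eq_comp, ← (hT.commute_adjoint_of_mem w hw j.succ).eq, mul_apply_eq_comp,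
      hPc, map_zero]
  exact (Submodule.mem_iInf _).mp (htail ⟨w (P c), hwPc, hPQc.symm⟩) i

end Succ

theorem iInf_map_pow_ker_adjoint {T : Fin n → H →L[ℂ] H} (hT : IsTwistedFamily Z T)
    (k : Fin n → ℕ) :
    (⨅ i, (LinearMap.ker (adjoint (T i) : H →ₗ[ℂ] H)).map ((T i ^ k i : H →L[ℂ] H) : H →ₗ[ℂ] H)) =
      (⨅ i, LinearMap.ker (adjoint (T i) : H →ₗ[ℂ] H)).map (opProd T k : H →ₗ[ℂ] H) := by
  induction n with
  | zero =>
    rw [iInf_of_empty, iInf_of_empty]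
    simp [opProd, Module.End.one_eq_id]
  | succ n ih =>
    have htail := ih hT.tail (Fin.tail k)
    exact le_antisymm (hT.iInf_map_pow_ker_adjoint_le_of_tail k htail.le)
      (hT.le_iInf_map_pow_ker_adjoint_of_tail k htail.ge)

end IsTwistedFamily

theorem IsNearIsometry.exists_antilipschitzWith {T : H →L[ℂ] H} (hT : IsNearIsometry T) :
    ∃ L, AntilipschitzWith L T := by
  obtain ⟨⟨δ, hδ, hT⟩, -⟩ := hT
  refine ⟨⟨δ⁻¹, inv_nonneg.mpr hδ.le⟩, T.antilipschitz_of_bound fun x => ?_⟩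
  change ‖x‖ ≤ δ⁻¹ * ‖T x‖
  rw [inv_mul_eq_div, le_div_iff₀ hδ, mul_comm]
  exact (hT x).1

theorem IsDoublyTwisted.isTwistedFamily {T : Fin n → H →L[ℂ] H}
    {U : Fin n → Fin n → H →L[ℂ] H} (h : IsDoublyTwisted T U) :
    IsTwistedFamily (unitary (H →L[ℂ] H) ⊓ Submonoid.centralizer (Set.range T)) T := by
  obtain ⟨hT, hU, -, -, hT'T, hTU, hTT⟩ := h
  set Z := unitary (H →L[ℂ] H) ⊓ Submonoid.centralizer (Set.range T)
  have mem_Z {w} : w ∈ Z ↔ w ∈ unitary (H →L[ℂ] H) ∧ ∀ i, Commute w (T i) := by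
    simp only [Z, Submonoid.mem_inf, Submonoid.mem_centralizer_iff, Set.forall_mem_range,
      commute_iff_eq, eq_comm]
  have star_mem {w} (hw : w ∈ Z) : star w ∈ Z := by
    rw [mem_Z] at hw ⊢
    exact ⟨Unitary.star_mem hw.1, fun i => (hw.2 i).star_left_of_mem_unitary hw.1⟩
  have U_mem {i j} (hij : i ≠ j) : U i j ∈ Z :=
    mem_Z.mpr ⟨⟨(hU i j hij).2, (hU i j hij).1⟩, fun k => (hTU k i j hij).symm⟩
  have commute_star {w} (hw : w ∈ Z) (i : Fin n) : Commute w (star (T i)) :=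
    ((mem_Z.mp (star_mem hw)).2 i).star_right
  refine
    { exists_antilipschitzWith := fun i => (hT i).exists_antilipschitzWith
      injective_of_mem := fun w hw => Function.LeftInverse.injective (g := ⇑(star w)) fun x => by
        rw [← mul_apply_eq_comp, Unitary.star_mul_self_of_mem (mem_Z.mp hw).1,
          one_apply_eq_self]
      commute_of_mem := fun w hw => (mem_Z.mp hw).2
      commute_adjoint_of_mem := fun w hw => commute_star hw
      twistCommute := fun i j hij => ⟨U i j, U_mem hij.ne, hTT i j hij⟩
      twistCommute_adjoint_left := fun i j hij =>
        ⟨star (U i j), star_mem (U_mem hij.ne), hT'T i j hij⟩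
      twistCommute_adjoint_right := fun i j hij => ⟨U i j, U_mem hij.ne, ?_⟩ }
  have e := congrArg star (hT'T i j hij)
  simp only [← star_eq_adjoint, star_mul, star_star] at e ⊢
  rw [e, mul_assoc, ← (commute_star (U_mem hij.ne) j).eq, ← mul_assoc,
    ← ((mem_Z.mp (U_mem hij.ne)).2 i).eq, mul_assoc]

end TwistedFamily

/-- For a doubly twisted near-isometry `(T₁,…,Tₙ)` and any multi-index
`(k₁,…,kₙ)`, `∩ᵢ T_i^{kᵢ}(ker T_i*) = T₁^{k₁} ⋯ Tₙ^{kₙ}(∩ᵢ ker T_i*)`. -/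
theorem stmt16 {H : Type*} [NormedAddCommGroup H] [InnerProductSpace ℂ H] [CompleteSpace H]
    {n : ℕ} (T : Fin n → H →L[ℂ] H) (U : Fin n → Fin n → H →L[ℂ] H)
    (h : IsDoublyTwisted T U) (k : Fin n → ℕ) :
    (⨅ i, (LinearMap.ker (adjoint (T i) : H →ₗ[ℂ] H)).map (((T i) ^ (k i) : H →L[ℂ] H) : H →ₗ[ℂ] H)) =
      (⨅ i, LinearMap.ker (adjoint (T i) : H →ₗ[ℂ] H)).map (opProd T k : H →ₗ[ℂ] H) :=
  h.isTwistedFamily.iInf_map_pow_ker_adjoint k
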